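/- arXiv:1608.02283 — 2 statements merged into one kernel-verified Lean document; each statement's English description precedes it below -/
import Mathlib

section
/- Let a ∈ ℝ, let U ⊆ ℝ³ be open, and let r : U → ℝ be a differentiable function with r > 0 satisfying (x² + y²)/(r² + a²) + z²/r² = 1 at every point (x,y,z) ∈ U. Define the vector field L : U → ℝ³ by L(x,y,z) = ((r x + a y)/(r² + a²), (r y − a x)/(r² + a²), z/r). Then L satisfies the flat-space geodesic equation Σ_{i=1}^{3} L_i ∂_i L_j = 0 on U for each j ∈ {1,2,3} (equivalently, ℓ^β ∂_β ℓ^α = 0 for the time-independent Kerr–Schild null vector ℓ). -/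
/-!
Differentiating the defining relation of `r` along `L` gives
`(1 - L·∇r) (r⁴ (x² + y²) + (r² + a²)² z²) = 0`, and the second factor is positive on the
surface, so `r` grows at unit rate along `L`. Each component of `L` is a rational function of
`x, y, z, r`, and with `L·∇r = 1` its derivative along `L` vanishes identically. Directional
derivatives are computed along the straight line `s ↦ p + s • L p`.
-/

open Filter Topology

theorem sum_mul_apply_single {ι R : Type*} [Fintype ι] [DecidableEq ι] [CommSemiring R]
    (f : (ι → R) →ₗ[R] R) (v : ι → R) :
    ∑ i, v i * f (Pi.single i 1) = f v := by
  simp_rw [← smul_eq_mul, ← map_smul, ← map_sum]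
  congr 1
  ext j
  simp [Pi.single_apply]

namespace KerrSchild

noncomputable def field (a ρ : ℝ) (x : Fin 3 → ℝ) : Fin 3 → ℝ :=
  ![(ρ * x 0 + a * x 1) / (ρ ^ 2 + a ^ 2), (ρ * x 1 - a * x 0) / (ρ ^ 2 + a ^ 2), x 2 / ρ]

theorem differentiableAt_field {a : ℝ} {r : (Fin 3 → ℝ) → ℝ} {p : Fin 3 → ℝ}
    (hr : DifferentiableAt ℝ r p) (hpos : 0 < r p) :
    DifferentiableAt ℝ (fun q => field a (r q) q) p := by
  have : r p ^ 2 + a ^ 2 ≠ 0 := by positivity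
  refine differentiableAt_pi.2 fun j => ?_
  fin_cases j <;> simp [field] <;> fun_prop (disch := positivity)

section Curve

variable {a t s₀ : ℝ} {c : ℝ → Fin 3 → ℝ} {R : ℝ → ℝ}

theorem radius_deriv_eq_one (hc : HasDerivAt c (field a (R s₀) (c s₀)) s₀)
    (hR : HasDerivAt R t s₀) (hpos : 0 < R s₀)
    (hcon : ∀ᶠ s in 𝓝 s₀,
      (c s 0 ^ 2 + c s 1 ^ 2) / (R s ^ 2 + a ^ 2) + c s 2 ^ 2 / R s ^ 2 = 1) :
    t = 1 := by
  have hx := hasDerivAt_pi.1 hc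
  have hS : R s₀ ^ 2 + a ^ 2 ≠ 0 := by positivity
  have hR2 : R s₀ ^ 2 ≠ 0 := by positivity
  have hderiv := ((((hx 0).pow 2).add ((hx 1).pow 2)).div ((hR.pow 2).add_const (a ^ 2)) hS).add
    (((hx 2).pow 2).div (hR.pow 2) hR2)
  have hderiv_zero := hderiv.unique ((hasDerivAt_const s₀ (1 : ℝ)).congr_of_eventuallyEq hcon)
  have hcon₀ := hcon.self_of_nhds
  simp only [Nat.cast_ofNat, Nat.add_one_sub_one, pow_one, field, Matrix.cons_val_zero,
    Matrix.cons_val_one, Pi.pow_apply, Pi.add_apply, Matrix.cons_val] at hderiv_zero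
  field_simp at hderiv_zero hcon₀
  -- on the surface, `R⁴ (x² + y²) + (R² + a²)² z² = (R² + a²) (R⁴ + a² z²)`
  have key : (1 - t) * ((R s₀ ^ 2 + a ^ 2) * (R s₀ ^ 4 + a ^ 2 * c s₀ 2 ^ 2)) = 0 := by
    linear_combination hderiv_zero / 2 - (1 - t) * R s₀ ^ 2 * hcon₀
  have hweight : 0 < (R s₀ ^ 2 + a ^ 2) * (R s₀ ^ 4 + a ^ 2 * c s₀ 2 ^ 2) := by positivity
  linarith [(mul_eq_zero.1 key).resolve_right hweight.ne']

theorem hasDerivAt_field_comp_eq_zero (hc : HasDerivAt c (field a (R s₀) (c s₀)) s₀)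
    (hR : HasDerivAt R 1 s₀) (hpos : 0 < R s₀) :
    HasDerivAt (fun s => field a (R s) (c s)) 0 s₀ := by
  have hx := hasDerivAt_pi.1 hc
  have hS : R s₀ ^ 2 + a ^ 2 ≠ 0 := by positivity
  have h₀ : HasDerivAt (fun s => field a (R s) (c s) 0) 0 s₀ := by
    refine (((hR.mul (hx 0)).add ((hx 1).const_mul a)).div
      ((hR.pow 2).add_const (a ^ 2)) hS).congr_deriv ?_
    simp [field]
    left
    field_simp
    ring
  have h₁ : HasDerivAt (fun s => field a (R s) (c s) 1) 0 s₀ := by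
    refine (((hR.mul (hx 1)).sub ((hx 0).const_mul a)).div
      ((hR.pow 2).add_const (a ^ 2)) hS).congr_deriv ?_
    simp [field]
    left
    field_simp
    ring
  have h₂ : HasDerivAt (fun s => field a (R s) (c s) 2) 0 s₀ := by
    refine ((hx 2).div hR hpos.ne').congr_deriv ?_
    simp [field]
    left
    field_simp
    ring
  refine hasDerivAt_pi.2 fun j => ?_
  fin_cases j
  exacts [h₀, h₁, h₂]

end Curve

end KerrSchild

open KerrSchild in
/-- Let `a ∈ ℝ`, `U ⊆ ℝ³` open, and `r : U → ℝ` a differentiable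
function with `r > 0` satisfying `(x² + y²)/(r² + a²) + z²/r² = 1` on `U`.  Define
`L = ((rx+ay)/(r²+a²), (ry−ax)/(r²+a²), z/r)`.  Then `L` satisfies the flat-space
geodesic equation `Σᵢ Lᵢ ∂ᵢ Lⱼ = 0` on `U` for each `j`. -/
theorem kerr_schild_null_vector_geodesic (a : ℝ) (U : Set (Fin 3 → ℝ)) (hU : IsOpen U)
    (r : (Fin 3 → ℝ) → ℝ)
    (hdiff : ∀ p ∈ U, DifferentiableAt ℝ r p)
    (hpos : ∀ p ∈ U, 0 < r p)
    (heq : ∀ p ∈ U,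
      ((p 0) ^ 2 + (p 1) ^ 2) / ((r p) ^ 2 + a ^ 2) + (p 2) ^ 2 / (r p) ^ 2 = 1)
    (L : (Fin 3 → ℝ) → Fin 3 → ℝ)
    (hL : ∀ p, L p = ![(r p * p 0 + a * p 1) / ((r p) ^ 2 + a ^ 2),
                       (r p * p 1 - a * p 0) / ((r p) ^ 2 + a ^ 2),
                       p 2 / r p]) :
    ∀ p ∈ U, ∀ j : Fin 3,
      ∑ i : Fin 3, L p i * fderiv ℝ (fun q => L q j) p (Pi.single i 1) = 0 := by
  obtain rfl : L = fun q => field a (r q) q := funext hL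
  intro p hp j
  set v := field a (r p) p
  set c : ℝ → Fin 3 → ℝ := fun s => p + s • v
  have hc₀ : c 0 = p := by simp [c]
  have hline : HasDerivAt c v 0 :=
    (((hasDerivAt_id (0 : ℝ)).smul_const v).const_add p).congr_deriv (one_smul ℝ v)
  have hc : HasDerivAt c (field a (r (c 0)) (c 0)) 0 := hc₀ ▸ hline
  have hpos₀ : 0 < r (c 0) := hc₀ ▸ hpos p hp
  have hcU : ∀ᶠ s in 𝓝 (0 : ℝ), c s ∈ U :=
    hc.continuousAt.eventually_mem (hc₀ ▸ hU.mem_nhds hp)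
  have hr := (hdiff p hp).hasFDerivAt.hasLineDerivAt v
  have hr_one := radius_deriv_eq_one hc hr hpos₀ (hcU.mono fun s hs => heq _ hs)
  have hL_const := hasDerivAt_field_comp_eq_zero hc (hr_one ▸ hr) hpos₀
  have hLj : DifferentiableAt ℝ (fun q => field a (r q) q j) p :=
    differentiableAt_pi.1 (differentiableAt_field (hdiff p hp) (hpos p hp)) j
  calc ∑ i, v i * fderiv ℝ (fun q => field a (r q) q j) p (Pi.single i 1)
      = fderiv ℝ (fun q => field a (r q) q j) p v :=
        sum_mul_apply_single (fderiv ℝ _ p).toLinearMap v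
    _ = 0 := (hLj.hasFDerivAt.hasLineDerivAt v).unique (hasDerivAt_pi.1 hL_const j)
end

section
/- Let a, M ∈ ℝ, let U ⊆ ℝ³ be open, and let r : U → ℝ be a twice continuously differentiable function with r > 0 satisfying (x² + y²)/(r² + a²) + z²/r² = 1 at every point (x,y,z) ∈ U. Then the function H : U → ℝ defined by H = M r³/(r⁴ + a² z²) is harmonic on U, i.e. ∂²_x H + ∂²_y H + ∂²_z H = 0 (equivalently, the time-independent Kerr–Schild potential H satisfies the background wave equation η^{αβ} ∂_α ∂_β H = 0). -/
/-!
Writing `z = r cos θ`, the potential is `H = M Re (1 / w)` with `w = r - i a z / r = r - i a cos θ`,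
and the Boyer–Lindquist relation says exactly that `w² = x² + y² + (z - i a)²`: `w` is a branch of
the distance to the complex point `c = (0, 0, i a)`. Differentiating `w² = ∑ⱼ (qⱼ - cⱼ)²` gives
`∂ⱼ w = (qⱼ - cⱼ) / w`, hence `∂ⱼ² w⁻¹ = 3 (qⱼ - cⱼ)² / w⁵ - 1 / w³`, and summing over the `n`
coordinates gives `Δ w⁻¹ = (3 - n) / w³`, which vanishes in dimension three. Taking `M Re` commutes
with the derivatives.
-/

open Complex Filter Topology

theorem fderiv_fderiv_clm_comp_apply {𝕜 E F G : Type*} [NontriviallyNormedField 𝕜]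
    [NormedAddCommGroup E] [NormedSpace 𝕜 E] [NormedAddCommGroup F] [NormedSpace 𝕜 F]
    [NormedAddCommGroup G] [NormedSpace 𝕜 G] (L : F →L[𝕜] G) {f : E → F} {p : E}
    (hf : ∀ᶠ q in 𝓝 p, DifferentiableAt 𝕜 f q) {v : E}
    (hf' : DifferentiableAt 𝕜 (fun q => fderiv 𝕜 f q v) p) (u : E) :
    fderiv 𝕜 (fun q => fderiv 𝕜 (fun q => L (f q)) q v) p u =
      L (fderiv 𝕜 (fun q => fderiv 𝕜 f q v) p u) := by
  have h : (fun q => fderiv 𝕜 (fun q => L (f q)) q v) =ᶠ[𝓝 p] fun q => L (fderiv 𝕜 f q v) :=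
    hf.mono fun q hq => by dsimp only; rw [fderiv_fun_comp q L.differentiableAt hq, L.fderiv]; rfl
  rw [h.fderiv_eq, fderiv_fun_comp p L.differentiableAt hf', L.fderiv]
  rfl

section ComplexPointSource

variable {n : ℕ}

def complexDistSq (c : Fin n → ℂ) (q : Fin n → ℝ) : ℂ := ∑ j, ((q j : ℂ) - c j) ^ 2

theorem fderiv_complexDistSq_apply (c : Fin n → ℂ) (q v : Fin n → ℝ) :
    fderiv ℝ (complexDistSq c) q v = 2 * ∑ j, ((q j : ℂ) - c j) * v j := by
  have h : HasFDerivAt (complexDistSq c) _ q := HasFDerivAt.fun_sum (u := Finset.univ) fun j _ =>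
    ((ofRealCLM.hasFDerivAt.comp q (hasFDerivAt_apply j q)).sub_const (c j)).pow 2
  rw [h.fderiv]
  simp [Finset.mul_sum, mul_assoc]

variable {c : Fin n → ℂ} {w : (Fin n → ℝ) → ℂ} {U : Set (Fin n → ℝ)}

theorem fderiv_apply_eq_of_sq_eq_complexDistSq {q : Fin n → ℝ} (hw : DifferentiableAt ℝ w q)
    (hw0 : w q ≠ 0) (hsq : (fun q => w q ^ 2) =ᶠ[𝓝 q] complexDistSq c) (v : Fin n → ℝ) :
    fderiv ℝ w q v = (∑ j, ((q j : ℂ) - c j) * v j) / w q := by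
  have hsq' : HasFDerivAt (fun q => w q ^ 2) _ q := hw.hasFDerivAt.pow 2
  have h := congrArg (· v) (hsq.fderiv_eq (𝕜 := ℝ))
  simp only [hsq'.fderiv, fderiv_complexDistSq_apply, smul_apply,
    nsmul_eq_mul, Nat.cast_ofNat, Nat.add_one_sub_one, pow_one, smul_eq_mul] at h
  field_simp
  linear_combination h / 2

theorem fderiv_inv_apply_eventuallyEq (hU : IsOpen U) (hw : DifferentiableOn ℝ w U)
    (hw0 : ∀ q ∈ U, w q ≠ 0) (hsq : ∀ q ∈ U, w q ^ 2 = complexDistSq c q) {p : Fin n → ℝ}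
    (hp : p ∈ U) (v : Fin n → ℝ) :
    (fun q => fderiv ℝ (fun q => (w q)⁻¹) q v) =ᶠ[𝓝 p]
      fun q => -(∑ j, ((q j : ℂ) - c j) * v j) * (w q ^ 3)⁻¹ := by
  filter_upwards [hU.mem_nhds hp] with q hq
  have hwq : HasFDerivAt w (fderiv ℝ w q) q := (hw.differentiableAt (hU.mem_nhds hq)).hasFDerivAt
  have hinv : HasFDerivAt (fun q => (w q)⁻¹) _ q := (hasFDerivAt_inv' (hw0 q hq)).comp q hwq
  rw [hinv.fderiv, ContinuousLinearMap.comp_apply, neg_apply,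
    ContinuousLinearMap.mulLeftRight_apply, fderiv_apply_eq_of_sq_eq_complexDistSq
      hwq.differentiableAt (hw0 q hq) (eventually_of_mem (hU.mem_nhds hq) hsq)]
  have := hw0 q hq
  field_simp

theorem differentiableAt_fderiv_inv_apply (hU : IsOpen U) (hw : DifferentiableOn ℝ w U)
    (hw0 : ∀ q ∈ U, w q ≠ 0) (hsq : ∀ q ∈ U, w q ^ 2 = complexDistSq c q) {p : Fin n → ℝ}
    (hp : p ∈ U) (v : Fin n → ℝ) :
    DifferentiableAt ℝ (fun q => fderiv ℝ (fun q => (w q)⁻¹) q v) p := by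
  rw [(fderiv_inv_apply_eventuallyEq hU hw hw0 hsq hp v).differentiableAt_iff]
  have hwp := hw.differentiableAt (hU.mem_nhds hp)
  have hw3 := pow_ne_zero 3 (hw0 p hp)
  fun_prop (disch := assumption)

theorem fderiv_fderiv_inv_apply (hU : IsOpen U) (hw : DifferentiableOn ℝ w U)
    (hw0 : ∀ q ∈ U, w q ≠ 0) (hsq : ∀ q ∈ U, w q ^ 2 = complexDistSq c q) {p : Fin n → ℝ}
    (hp : p ∈ U) (v : Fin n → ℝ) :
    fderiv ℝ (fun q => fderiv ℝ (fun q => (w q)⁻¹) q v) p v =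
      3 * (∑ j, ((p j : ℂ) - c j) * v j) ^ 2 / w p ^ 5 - (∑ j, (v j : ℂ) ^ 2) / w p ^ 3 := by
  have hwp := hw.differentiableAt (hU.mem_nhds hp)
  have hL : HasFDerivAt (fun q => ∑ j, ((q j : ℂ) - c j) * v j) _ p :=
    HasFDerivAt.fun_sum (u := Finset.univ) fun j _ =>
      ((ofRealCLM.hasFDerivAt.comp p (hasFDerivAt_apply j p)).sub_const (c j)).mul_const (v j : ℂ)
  have hW : HasFDerivAt (fun q => (w q ^ 3)⁻¹) _ p :=
    (hasFDerivAt_inv' (pow_ne_zero 3 (hw0 p hp))).comp p (hwp.hasFDerivAt.pow 3)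
  have h : HasFDerivAt (fun q => -(∑ j, ((q j : ℂ) - c j) * v j) * (w q ^ 3)⁻¹) _ p :=
    hL.neg.mul hW
  rw [(fderiv_inv_apply_eventuallyEq hU hw hw0 hsq hp v).fderiv_eq, h.fderiv]
  simp only [Pi.neg_apply, Nat.add_one_sub_one, nsmul_eq_mul, Nat.cast_ofNat,
    ContinuousLinearMap.neg_comp, smul_neg, neg_smul, neg_neg, add_apply,
    smul_apply, ContinuousLinearMap.comp_apply, smul_eq_mul,
    ContinuousLinearMap.mulLeftRight_apply, neg_apply,
    sum_apply, ContinuousLinearMap.proj_apply, ofRealCLM_apply]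
  rw [fderiv_apply_eq_of_sq_eq_complexDistSq hwp (hw0 p hp)
    (eventually_of_mem (hU.mem_nhds hp) hsq)]
  have := hw0 p hp
  field_simp
  ring

theorem sum_fderiv_fderiv_inv_single (hU : IsOpen U) (hw : DifferentiableOn ℝ w U)
    (hw0 : ∀ q ∈ U, w q ≠ 0) (hsq : ∀ q ∈ U, w q ^ 2 = complexDistSq c q) {p : Fin n → ℝ}
    (hp : p ∈ U) :
    ∑ i, fderiv ℝ (fun q => fderiv ℝ (fun q => (w q)⁻¹) q (Pi.single i 1)) p (Pi.single i 1) =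
      (3 - n) / w p ^ 3 := by
  have := hw0 p hp
  calc _ = ∑ i, (3 * ((p i : ℂ) - c i) ^ 2 / w p ^ 5 - 1 / w p ^ 3) := by
        simp [fderiv_fderiv_inv_apply hU hw hw0 hsq hp, Pi.single_apply, apply_ite]
    _ = 3 * w p ^ 2 / w p ^ 5 - n / w p ^ 3 := by
        simp [hsq p hp, complexDistSq, Finset.mul_sum, Finset.sum_div, ← div_eq_mul_inv]
    _ = (3 - n) / w p ^ 3 := by
        field_simp

end ComplexPointSource

noncomputable def kerrComplexRadius (a ρ z : ℝ) : ℂ := ρ - (a * z / ρ : ℝ) * I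

@[simp]
theorem kerrComplexRadius_re (a ρ z : ℝ) : (kerrComplexRadius a ρ z).re = ρ := by
  simp [kerrComplexRadius]

@[simp]
theorem kerrComplexRadius_im (a ρ z : ℝ) : (kerrComplexRadius a ρ z).im = -(a * z / ρ) := by
  simp [kerrComplexRadius]

theorem kerrComplexRadius_ne_zero {a ρ : ℝ} (z : ℝ) (hρ : ρ ≠ 0) :
    kerrComplexRadius a ρ z ≠ 0 := fun h => hρ <| by
  simpa using congrArg re h

theorem inv_kerrComplexRadius_re {a ρ : ℝ} (z : ℝ) (hρ : ρ ≠ 0) :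
    (kerrComplexRadius a ρ z)⁻¹.re = ρ ^ 3 / (ρ ^ 4 + a ^ 2 * z ^ 2) := by
  rw [inv_re, normSq_apply, kerrComplexRadius_re, kerrComplexRadius_im]
  field_simp

theorem kerrComplexRadius_sq {a ρ : ℝ} {q : Fin 3 → ℝ} (hρ : ρ ≠ 0)
    (h : (q 0 ^ 2 + q 1 ^ 2) / (ρ ^ 2 + a ^ 2) + q 2 ^ 2 / ρ ^ 2 = 1) :
    kerrComplexRadius a ρ (q 2) ^ 2 = complexDistSq ![0, 0, a * I] q := by
  have hρa : ρ ^ 2 + a ^ 2 ≠ 0 := by positivity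
  field_simp at h
  have h' : ((q 0 ^ 2 + q 1 ^ 2) * ρ ^ 2 + (ρ ^ 2 + a ^ 2) * q 2 ^ 2 : ℂ) =
      ρ ^ 2 * (ρ ^ 2 + a ^ 2) := by
    exact_mod_cast h
  have hρ' : (ρ : ℂ) ≠ 0 := by exact_mod_cast hρ
  simp only [kerrComplexRadius, complexDistSq, Fin.sum_univ_three, ofReal_div, ofReal_mul,
    Matrix.cons_val_zero, Matrix.cons_val_one, Matrix.cons_val, sub_zero]
  field_simp
  linear_combination (-1 : ℂ) * h' + (a ^ 2 * q 2 ^ 2 - ρ ^ 2 * a ^ 2 : ℂ) * I_sq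

theorem DifferentiableOn.kerrComplexRadius {a : ℝ} {U : Set (Fin 3 → ℝ)}
    {r : (Fin 3 → ℝ) → ℝ} (hr : DifferentiableOn ℝ r U) (hr0 : ∀ q ∈ U, r q ≠ 0) :
    DifferentiableOn ℝ (fun q => kerrComplexRadius a (r q) (q 2)) U := by
  unfold _root_.kerrComplexRadius
  intro q hq
  have := hr0 q hq
  have := hr q hq
  fun_prop (disch := assumption)

/-- Let `a, M ∈ ℝ`, `U ⊆ ℝ³` open, and `r : U → ℝ` a twice
continuously differentiable function with `r > 0` satisfying the Boyer–Lindquist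
relation on `U`.  Then `H = M r³/(r⁴ + a² z²)` is harmonic on `U`:
`∂²ₓH + ∂²ᵧH + ∂²_zH = 0` (the time-independent background wave equation). -/
theorem kerr_schild_potential_harmonic (a M : ℝ) (U : Set (Fin 3 → ℝ)) (hU : IsOpen U)
    (r : (Fin 3 → ℝ) → ℝ)
    (hreg : ContDiffOn ℝ 2 r U)
    (hpos : ∀ p ∈ U, 0 < r p)
    (heq : ∀ p ∈ U,
      ((p 0) ^ 2 + (p 1) ^ 2) / ((r p) ^ 2 + a ^ 2) + (p 2) ^ 2 / (r p) ^ 2 = 1)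
    (H : (Fin 3 → ℝ) → ℝ)
    (hH : ∀ p, H p = M * (r p) ^ 3 / ((r p) ^ 4 + a ^ 2 * (p 2) ^ 2)) :
    ∀ p ∈ U, ∑ i : Fin 3,
      fderiv ℝ (fun q => fderiv ℝ H q (Pi.single i 1)) p (Pi.single i 1) = 0 := by
  intro p hp
  set w : (Fin 3 → ℝ) → ℂ := fun q => kerrComplexRadius a (r q) (q 2)
  have hw : DifferentiableOn ℝ w U :=
    (hreg.differentiableOn (by norm_num)).kerrComplexRadius fun q hq => (hpos q hq).ne'
  have hw0 : ∀ q ∈ U, w q ≠ 0 := fun q hq => kerrComplexRadius_ne_zero _ (hpos q hq).ne'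
  have hsq : ∀ q ∈ U, w q ^ 2 = complexDistSq ![0, 0, a * I] q := fun q hq =>
    kerrComplexRadius_sq (hpos q hq).ne' (heq q hq)
  set L : ℂ →L[ℝ] ℝ := M • reCLM
  have hHw : H =ᶠ[𝓝 p] fun q => L (w q)⁻¹ := by
    filter_upwards [hU.mem_nhds hp] with q hq
    simp [L, w, hH, inv_kerrComplexRadius_re _ (hpos q hq).ne', mul_div_assoc]
  have hinv : ∀ᶠ q in 𝓝 p, DifferentiableAt ℝ (fun q => (w q)⁻¹) q := by
    filter_upwards [hU.mem_nhds hp] with q hq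
    exact (hw.differentiableAt (hU.mem_nhds hq)).inv (hw0 q hq)
  have hsecond : ∀ v, fderiv ℝ (fun q => fderiv ℝ H q v) p v =
      L (fderiv ℝ (fun q => fderiv ℝ (fun q => (w q)⁻¹) q v) p v) := fun v => by
    have hfirst : (fun q => fderiv ℝ H q v) =ᶠ[𝓝 p] fun q => fderiv ℝ (fun q => L (w q)⁻¹) q v :=
      hHw.fderiv.mono fun q hq => DFunLike.congr_fun hq v
    rw [hfirst.fderiv_eq,
      fderiv_fderiv_clm_comp_apply L hinv (differentiableAt_fderiv_inv_apply hU hw hw0 hsq hp v)]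
  simp only [hsecond, ← map_sum, sum_fderiv_fderiv_inv_single hU hw hw0 hsq hp]
  simp
end
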